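/- (Uniqueness of strong solutions, classical regularity.) Let n ≥ 1, 0 < λ ≤ Λ, γ ≥ 0, μ ≥ 0, and let Ω ⊂ ℝⁿ be a nonempty bounded open set. Let F = F(x,r,p,M) satisfy, for every x ∈ Ω, the structure condition 𝒫⁻_{λ,Λ}(M−N) − γ|p−q| − μ·max(s−r,0) ≤ F(x,r,p,M) − F(x,s,q,N) ≤ 𝒫⁺_{λ,Λ}(M−N) + γ|p−q| + μ·max(r−s,0) for all r, s ∈ ℝ, p, q ∈ ℝⁿ and symmetric M, N. If u and v are continuous on the closure of Ω, twice continuously differentiable in Ω, satisfy F[u](x) = F[v](x) for almost every x ∈ Ω, and u = v on ∂Ω, then u = v on all of the closure of Ω. -/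

import Mathlib

open MeasureTheory Matrix
open scoped ENNReal NNReal

/-- The set `S(λ,Λ)` of symmetric `n×n` matrices with `λI ≤ A ≤ ΛI` in the Loewner order. -/
def pucciSet (n : ℕ) (lam Lam : ℝ) : Set (Matrix (Fin n) (Fin n) ℝ) :=
  {A | A.IsSymm ∧ (A - lam • (1 : Matrix (Fin n) (Fin n) ℝ)).PosSemidef ∧
       (Lam • (1 : Matrix (Fin n) (Fin n) ℝ) - A).PosSemidef}

/-- The Pucci extremal operator `𝒫⁺_{λ,Λ}(M) = sup_{A ∈ S(λ,Λ)} (−tr(A·M))`. -/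
noncomputable def pucciPlus (n : ℕ) (lam Lam : ℝ) (M : Matrix (Fin n) (Fin n) ℝ) : ℝ :=
  sSup ((fun A => -(A * M).trace) '' pucciSet n lam Lam)

/-- The Pucci extremal operator `𝒫⁻_{λ,Λ}(M) = inf_{A ∈ S(λ,Λ)} (−tr(A·M))`. -/
noncomputable def pucciMinus (n : ℕ) (lam Lam : ℝ) (M : Matrix (Fin n) (Fin n) ℝ) : ℝ :=
  sInf ((fun A => -(A * M).trace) '' pucciSet n lam Lam)

/-- The Frobenius norm of a matrix. -/
noncomputable def frobNorm (n : ℕ) (M : Matrix (Fin n) (Fin n) ℝ) : ℝ :=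
  Real.sqrt (∑ i, ∑ j, (M i j) ^ 2)

/-- The Hessian matrix `D²v(x)` of `v : ℝⁿ → ℝ`, with entries the second partial
derivatives `∂ᵢ∂ⱼ v (x)`. -/
noncomputable def hessianMatrix (n : ℕ) (v : EuclideanSpace ℝ (Fin n) → ℝ)
    (x : EuclideanSpace ℝ (Fin n)) : Matrix (Fin n) (Fin n) ℝ :=
  Matrix.of fun i j =>
    fderiv ℝ (fun y => fderiv ℝ v y (EuclideanSpace.single j 1)) x (EuclideanSpace.single i 1)

variable {n : ℕ} {lam Lam : ℝ}

lemma posSemidef_smul_one {c : ℝ} (hc : 0 ≤ c) :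
    ((c • (1 : Matrix (Fin n) (Fin n) ℝ))).PosSemidef := by
  apply Matrix.PosSemidef.of_dotProduct_mulVec_nonneg
  · ext i j
    simp [Matrix.conjTranspose, Matrix.one_apply]
  · intro x
    have : star x ⬝ᵥ (c • (1 : Matrix (Fin n) (Fin n) ℝ)).mulVec x = c * (x ⬝ᵥ x) := by
      simp [Matrix.smul_mulVec, Matrix.one_mulVec, dotProduct_smul, star_trivial,
        smul_eq_mul]
    rw [this]
    exact mul_nonneg hc (Finset.sum_nonneg fun i _ => mul_self_nonneg _)

lemma smul_one_mem_pucciSet (hlam : 0 ≤ lam) (hle : lam ≤ Lam) :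
    lam • (1 : Matrix (Fin n) (Fin n) ℝ) ∈ pucciSet n lam Lam := by
  refine ⟨(Matrix.isSymm_one).smul lam, ?_, ?_⟩
  · simpa using (posSemidef_smul_one (le_refl (0:ℝ)) : ((0:ℝ) • (1 : Matrix (Fin n) (Fin n) ℝ)).PosSemidef)
  · have : Lam • (1 : Matrix (Fin n) (Fin n) ℝ) - lam • 1 = (Lam - lam) • 1 := by
      rw [sub_smul]
    rw [this]
    exact posSemidef_smul_one (by linarith)

lemma quad_nonneg {M : Matrix (Fin n) (Fin n) ℝ} (hM : M.PosSemidef) (x : Fin n → ℝ) :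
    0 ≤ x ⬝ᵥ M.mulVec x := by simpa [star_trivial] using hM.dotProduct_mulVec_nonneg x

lemma diag_le {A : Matrix (Fin n) (Fin n) ℝ} (hA : A ∈ pucciSet n lam Lam) (i : Fin n) :
    lam ≤ A i i ∧ A i i ≤ Lam := by
  have h1 := quad_nonneg hA.2.1 (Pi.single i 1)
  have h2 := quad_nonneg hA.2.2 (Pi.single i 1)
  simp [Matrix.sub_mulVec, Matrix.smul_mulVec, Matrix.one_mulVec,
    Matrix.mulVec_single, dotProduct_sub, dotProduct_smul,
    single_dotProduct, Pi.single_apply] at h1 h2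
  constructor <;> linarith

lemma entry_abs_le {A : Matrix (Fin n) (Fin n) ℝ} (hlam : 0 ≤ lam) (hle : lam ≤ Lam)
    (hA : A ∈ pucciSet n lam Lam) (i j : Fin n) : |A i j| ≤ Lam := by
  rcases eq_or_ne i j with rfl | hij
  · have := diag_le hA i
    rw [abs_le]; constructor <;> nlinarith
  · have key : ∀ ε : ℝ, (ε = 1 ∨ ε = -1) →
        ε * (A i j + A j i) ≤ 2 * Lam - A i i - A j j := by
      intro ε hε2
      have h2 := quad_nonneg hA.2.2 ((Pi.single i (1:ℝ) : Fin n → ℝ) + ε • (Pi.single j (1:ℝ) : Fin n → ℝ))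
      simp only [Matrix.mulVec_add, Matrix.mulVec_smul, dotProduct_add, add_dotProduct,
        smul_dotProduct, dotProduct_smul, Matrix.mulVec_single, single_dotProduct,
        smul_eq_mul, mul_one, one_mul, Matrix.sub_apply, Matrix.smul_apply, Matrix.one_apply,
        if_pos rfl, if_neg hij, if_neg (Ne.symm hij)] at h2
      norm_num at h2
      rw [Matrix.one_apply_ne hij, Matrix.one_apply_ne (Ne.symm hij)] at h2
      rcases hε2 with rfl | rfl <;> norm_num at h2 ⊢ <;> linarith
    have hsym : A j i = A i j := by
      have := hA.1
      rw [Matrix.IsSymm] at this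
      calc A j i = Aᵀ i j := rfl
        _ = A i j := by rw [this]
    have k1 := key 1 (Or.inl rfl)
    have k2 := key (-1) (Or.inr rfl)
    have d1 := diag_le hA i
    have d2 := diag_le hA j
    rw [abs_le]; constructor <;> nlinarith

lemma trace_abs_le {A M : Matrix (Fin n) (Fin n) ℝ} (hlam : 0 ≤ lam) (hle : lam ≤ Lam)
    (hA : A ∈ pucciSet n lam Lam) :
    |(A * M).trace| ≤ Lam * ∑ i, ∑ j, |M i j| := by
  have : (A * M).trace = ∑ i, ∑ j, A i j * M j i := by
    simp [Matrix.trace, Matrix.diag, Matrix.mul_apply]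
  rw [this]
  calc |∑ i, ∑ j, A i j * M j i| ≤ ∑ i, ∑ j, |A i j * M j i| := by
        refine (Finset.abs_sum_le_sum_abs _ _).trans ?_
        refine Finset.sum_le_sum fun i _ => Finset.abs_sum_le_sum_abs _ _
    _ ≤ ∑ i, ∑ j, Lam * |M j i| := by
        refine Finset.sum_le_sum fun i _ => Finset.sum_le_sum fun j _ => ?_
        rw [abs_mul]
        exact mul_le_mul_of_nonneg_right (entry_abs_le hlam hle hA i j) (abs_nonneg _)
    _ = Lam * ∑ i, ∑ j, |M i j| := by
        rw [Finset.mul_sum]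
        rw [Finset.sum_comm]
        congr 1; ext i; rw [Finset.mul_sum]

lemma pucci_image_nonempty (hlam : 0 ≤ lam) (hle : lam ≤ Lam) (M : Matrix (Fin n) (Fin n) ℝ) :
    ((fun A => -(A * M).trace) '' pucciSet n lam Lam).Nonempty :=
  ⟨_, Set.mem_image_of_mem _ (smul_one_mem_pucciSet hlam hle)⟩

lemma pucci_image_bddBelow (hlam : 0 ≤ lam) (hle : lam ≤ Lam) (M : Matrix (Fin n) (Fin n) ℝ) :
    BddBelow ((fun A => -(A * M).trace) '' pucciSet n lam Lam) := by
  refine ⟨-(Lam * ∑ i, ∑ j, |M i j|), ?_⟩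
  rintro y ⟨A, hA, rfl⟩
  have := trace_abs_le (M := M) hlam hle hA
  rw [abs_le] at this
  dsimp only
  linarith [this.2]

lemma pucciMinus_lipschitz (hlam : 0 ≤ lam) (hle : lam ≤ Lam)
    (M N : Matrix (Fin n) (Fin n) ℝ) :
    pucciMinus n lam Lam M ≤ pucciMinus n lam Lam N + Lam * ∑ i, ∑ j, |(M - N) i j| := by
  rw [pucciMinus, pucciMinus]
  rw [← sub_le_iff_le_add]
  refine le_csInf (pucci_image_nonempty hlam hle N) ?_
  rintro y ⟨A, hA, rfl⟩
  have h1 : sInf ((fun A => -(A * M).trace) '' pucciSet n lam Lam) ≤ -(A * M).trace :=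
    csInf_le (pucci_image_bddBelow hlam hle M) (Set.mem_image_of_mem _ hA)
  have h2 : -(A * M).trace = -(A * N).trace - (A * (M - N)).trace := by
    rw [Matrix.mul_sub, Matrix.trace_sub]; ring
  have h3 := trace_abs_le (M := M - N) hlam hle hA
  rw [abs_le] at h3
  simp only [h2] at h1
  dsimp only
  linarith [h3.1]

lemma trace_mul_nonpos {A M : Matrix (Fin n) (Fin n) ℝ} (hA : A.PosSemidef)
    (hM : ∀ y : Fin n → ℝ, y ⬝ᵥ M.mulVec y ≤ 0) : (A * M).trace ≤ 0 := by
  obtain ⟨B, hBH, hBB⟩ : ∃ B : Matrix (Fin n) (Fin n) ℝ, B.IsHermitian ∧ B * B = A :=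
    open scoped MatrixOrder in ⟨CFC.sqrt A, (CFC.sqrt_nonneg A).posSemidef.1, CFC.sqrt_mul_sqrt_self A hA.nonneg⟩
  have hBsymm : ∀ i j, B i j = B j i := by
    intro i j
    have := congrFun (congrFun hBH j) i
    simpa [Matrix.conjTranspose_apply] using this
  have key : (A * M).trace = ∑ k, (fun i => B k i) ⬝ᵥ M.mulVec (fun i => B k i) := by
    rw [← hBB, mul_assoc, Matrix.trace_mul_comm B (B * M)]
    rw [Matrix.trace]
    refine Finset.sum_congr rfl fun k _ => ?_
    rw [Matrix.diag_apply]
    simp only [Matrix.mul_apply, dotProduct, Matrix.mulVec, Finset.sum_mul, Finset.mul_sum]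
    rw [Finset.sum_comm]
    refine Finset.sum_congr rfl fun i _ => Finset.sum_congr rfl fun j _ => ?_
    rw [hBsymm j k]
    ring
  rw [key]
  exact Finset.sum_nonpos fun k _ => hM _

lemma pucci_lower {M : Matrix (Fin n) (Fin n) ℝ} (hlam : 0 < lam) (hle : lam ≤ Lam)
    (i₀ : Fin n) {c : ℝ} (hc : 0 ≤ c)
    (hq : ∀ y : Fin n → ℝ, y ⬝ᵥ M.mulVec y ≤ -(c * (y i₀) ^ 2)) :
    lam * c ≤ pucciMinus n lam Lam M := by
  refine le_csInf (pucci_image_nonempty hlam.le hle M) ?_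
  rintro y ⟨A, hA, rfl⟩
  have hApsd : A.PosSemidef := by
    have h1 : A = (A - lam • 1) + lam • 1 := by rw [sub_add_cancel]
    rw [h1]; exact (hA.2.1).add (posSemidef_smul_one hlam.le)
  set M' := M + c • Matrix.single i₀ i₀ (1:ℝ) with hM'
  have hq' : ∀ z : Fin n → ℝ, z ⬝ᵥ M'.mulVec z ≤ 0 := by
    intro z
    have h2 : z ⬝ᵥ M'.mulVec z = z ⬝ᵥ M.mulVec z + c * (z i₀) ^ 2 := by
      rw [hM', Matrix.add_mulVec, dotProduct_add, Matrix.smul_mulVec, dotProduct_smul,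
        Matrix.single_mulVec]
      have : z ⬝ᵥ Function.update (0 : Fin n → ℝ) i₀ (1 * z i₀) = z i₀ * z i₀ := by
        rw [dotProduct]
        rw [Finset.sum_eq_single i₀]
        · simp
        · intro b _ hb; simp [Function.update, hb]
        · simp
      rw [this, smul_eq_mul]
      ring
    linarith [hq z]
  have htr := trace_mul_nonpos hApsd hq'
  have hsplit : (A * M').trace = (A * M).trace + c * A i₀ i₀ := by
    rw [hM', Matrix.mul_add, Matrix.trace_add]
    congr 1
    rw [Matrix.mul_smul, Matrix.trace_smul, smul_eq_mul]
    congr 1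
    rw [Matrix.trace]
    rw [Finset.sum_eq_single i₀]
    · simp
    · intro b _ hb
      exact Matrix.mul_single_apply_of_ne 1 i₀ i₀ b b hb A
    · simp
  have hdiag := (diag_le hA i₀).1
  dsimp only
  nlinarith

lemma euclid_decomp (y : EuclideanSpace ℝ (Fin n)) :
    y = ∑ i, y i • EuclideanSpace.single i (1:ℝ) := by
  have := (EuclideanSpace.basisFun (Fin n) ℝ).sum_repr y
  simp only [EuclideanSpace.basisFun_repr, EuclideanSpace.basisFun_apply] at this
  exact this.symm

lemma hessian_apply {f : EuclideanSpace ℝ (Fin n) → ℝ} {x : EuclideanSpace ℝ (Fin n)}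
    (hf : ContDiffAt ℝ 2 f x) (i j : Fin n) :
    hessianMatrix n f x i j
      = fderiv ℝ (fderiv ℝ f) x (EuclideanSpace.single i 1) (EuclideanSpace.single j 1) := by
  have hd : DifferentiableAt ℝ (fderiv ℝ f) x :=
    (hf.fderiv_right (m := 1) (le_refl _)).differentiableAt one_ne_zero
  show fderiv ℝ (fun y => fderiv ℝ f y (EuclideanSpace.single j 1)) x (EuclideanSpace.single i 1) = _
  rw [fderiv_clm_apply hd (differentiableAt_const _)]
  simp

lemma quadform_hessian {f : EuclideanSpace ℝ (Fin n) → ℝ} {x : EuclideanSpace ℝ (Fin n)}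
    (hf : ContDiffAt ℝ 2 f x) (y : EuclideanSpace ℝ (Fin n)) :
    (fun i => y i) ⬝ᵥ (hessianMatrix n f x).mulVec (fun i => y i)
      = fderiv ℝ (fderiv ℝ f) x y y := by
  set B := fderiv ℝ (fderiv ℝ f) x with hB
  have h1 : B y = ∑ i, y i • B (EuclideanSpace.single i 1) := by
    conv_lhs => rw [euclid_decomp y]
    rw [map_sum]
    exact Finset.sum_congr rfl fun i _ => by rw [_root_.map_smul]
  have h2 : ∀ L : EuclideanSpace ℝ (Fin n) →L[ℝ] ℝ,
      L y = ∑ j, y j * L (EuclideanSpace.single j 1) := by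
    intro L
    conv_lhs => rw [euclid_decomp y]
    rw [map_sum]
    exact Finset.sum_congr rfl fun j _ => by rw [_root_.map_smul]; rfl
  calc (fun i => y i) ⬝ᵥ (hessianMatrix n f x).mulVec (fun i => y i)
      = ∑ i, y i * ∑ j, hessianMatrix n f x i j * y j := by
        simp [dotProduct, Matrix.mulVec]
    _ = ∑ i, y i * (B (EuclideanSpace.single i 1)) y := by
        refine Finset.sum_congr rfl fun i _ => ?_
        rw [h2 (B (EuclideanSpace.single i 1))]
        congr 1
        refine Finset.sum_congr rfl fun j _ => ?_
        rw [hessian_apply hf i j, mul_comm]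
    _ = B y y := by
        rw [h1, ContinuousLinearMap.sum_apply]
        exact Finset.sum_congr rfl fun i _ => by simp

open Filter Topology in
lemma snd_deriv_nonpos_of_isLocalMax {ψ : EuclideanSpace ℝ (Fin n) → ℝ}
    {z : EuclideanSpace ℝ (Fin n)} (hψ : ContDiffAt ℝ 2 ψ z) (hmax : IsLocalMax ψ z)
    (y : EuclideanSpace ℝ (Fin n)) : fderiv ℝ (fderiv ℝ ψ) z y y ≤ 0 := by
  by_contra hpos
  push_neg at hpos
  set B := fderiv ℝ (fderiv ℝ ψ) z with hB
  -- a neighborhood where ψ is C²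
  obtain ⟨U, hU_nhds, hUc⟩ : ∃ u ∈ 𝓝 z, ContDiffOn ℝ 2 ψ u := hψ.contDiffOn le_rfl (by simp)
  obtain ⟨V, hVU, hVopen, hzV⟩ := mem_nhds_iff.1 hU_nhds
  have hdiff : ∀ w ∈ V, DifferentiableAt ℝ ψ w := fun w hw =>
    (((hUc.mono hVU) w hw).contDiffAt (hVopen.mem_nhds hw)).differentiableAt two_ne_zero
  set c : ℝ → EuclideanSpace ℝ (Fin n) := fun t => z + t • y with hc_def
  have hc0 : c 0 = z := by simp [hc_def]
  have hc : ∀ t : ℝ, HasDerivAt c y t := by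
    intro t
    simpa [hc_def] using ((hasDerivAt_id t).smul_const y).const_add z
  set G : ℝ → ℝ := fun t => fderiv ℝ ψ (c t) y with hG_def
  have hdF : DifferentiableAt ℝ (fderiv ℝ ψ) z :=
    (hψ.fderiv_right (m := 1) (le_refl _)).differentiableAt one_ne_zero
  have hG : HasDerivAt G (B y y) 0 := by
    have h1 : HasDerivAt (fun t => fderiv ℝ ψ (c t)) (B y) 0 := by
      have h0 : HasFDerivAt (fderiv ℝ ψ) B (c 0) := hc0.symm ▸ hdF.hasFDerivAt
      exact h0.comp_hasDerivAt 0 (hc 0)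
    have h2 := h1.clm_apply (hasDerivAt_const (0:ℝ) y)
    simpa [hc0] using h2
  have hG0 : G 0 = 0 := by
    rw [hG_def]
    simp only [hc0, hmax.fderiv_eq_zero]
    rfl
  -- positivity of G on a right neighborhood
  have hslope : ∀ᶠ t in 𝓝[≠] (0:ℝ), 0 < (G t - G 0) / (t - 0) := by
    have := hasDerivAt_iff_tendsto_slope.1 hG
    have h2 : ∀ᶠ s in 𝓝 (B y y), 0 < s := eventually_gt_nhds hpos
    filter_upwards [this.eventually h2] with t ht
    simpa [slope_def_field, div_eq_inv_mul] using ht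
  obtain ⟨ε₁, hε₁, hε₁p⟩ : ∃ ε > 0, ∀ t : ℝ, t ≠ 0 → |t - 0| < ε → 0 < (G t - G 0) / (t - 0) := by
    have := (eventually_nhdsWithin_iff.1 hslope)
    rw [Metric.eventually_nhds_iff] at this
    obtain ⟨ε, hε, h⟩ := this
    exact ⟨ε, hε, fun t ht hd => h (by simpa [Real.dist_eq] using hd) ht⟩
  have hGpos : ∀ t : ℝ, 0 < t → t < ε₁ → 0 < G t := by
    intro t ht hlt
    have := hε₁p t (ne_of_gt ht) (by rw [sub_zero, abs_of_pos ht]; exact hlt)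
    rw [hG0, sub_zero, sub_zero] at this
    exact (div_pos_iff.1 this).resolve_right (fun h => absurd ht (not_lt.2 h.2.le)) |>.1
  -- c t ∈ V for small t
  have hcc : ContinuousAt c 0 := (hc 0).continuousAt
  obtain ⟨ε₀, hε₀, hcV⟩ : ∃ ε > 0, ∀ t : ℝ, |t| < ε → c t ∈ V := by
    have := hcc.preimage_mem_nhds (hVopen.mem_nhds (hc0 ▸ hzV))
    rw [Metric.mem_nhds_iff] at this
    obtain ⟨ε, hε, h⟩ := this
    exact ⟨ε, hε, fun t ht => h (by simpa [Real.dist_eq] using ht)⟩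
  -- local max along the line
  obtain ⟨ε₂, hε₂, hmax'⟩ : ∃ ε > 0, ∀ t : ℝ, |t| < ε → ψ (c t) ≤ ψ z := by
    have h3 : ∀ᶠ x in 𝓝 (c 0), ψ x ≤ ψ z := by rw [hc0]; exact hmax
    have h2 : ∀ᶠ t in 𝓝 (0:ℝ), ψ (c t) ≤ ψ z := Filter.Tendsto.eventually hcc h3
    rw [Metric.eventually_nhds_iff] at h2
    obtain ⟨ε, hε, h⟩ := h2
    exact ⟨ε, hε, fun t ht => h (by simpa [Real.dist_eq] using ht)⟩
  set T : ℝ := min ε₀ (min ε₁ ε₂) / 2 with hT_def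
  have hT : 0 < T := by positivity
  have hTε₀ : T < ε₀ := by
    have h1 : min ε₀ (min ε₁ ε₂) ≤ ε₀ := min_le_left _ _
    have h2 : 0 < min ε₀ (min ε₁ ε₂) := by positivity
    rw [hT_def]; linarith
  have hTε₁ : T < ε₁ := by
    have h1 : min ε₀ (min ε₁ ε₂) ≤ ε₁ := (min_le_right _ _).trans (min_le_left _ _)
    have h2 : 0 < min ε₀ (min ε₁ ε₂) := by positivity
    rw [hT_def]; linarith
  have hTε₂ : T < ε₂ := by
    have h1 : min ε₀ (min ε₁ ε₂) ≤ ε₂ := (min_le_right _ _).trans (min_le_right _ _)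
    have h2 : 0 < min ε₀ (min ε₁ ε₂) := by positivity
    rw [hT_def]; linarith
  set g : ℝ → ℝ := fun t => ψ (c t) with hg_def
  have hgd : ∀ t ∈ Set.Icc (0:ℝ) T, HasDerivAt g (G t) t := by
    intro t ht
    have hcV' : c t ∈ V := hcV t (by
      rw [abs_of_nonneg ht.1]; exact lt_of_le_of_lt ht.2 hTε₀)
    exact ((hdiff _ hcV').hasFDerivAt).comp_hasDerivAt t (hc t)
  have hgmono : StrictMonoOn g (Set.Icc (0:ℝ) T) := by
    refine strictMonoOn_of_deriv_pos (convex_Icc _ _) ?_ ?_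
    · exact fun t ht => (hgd t ht).continuousAt.continuousWithinAt
    · intro t ht
      rw [interior_Icc] at ht
      rw [(hgd t ⟨ht.1.le, ht.2.le⟩).deriv]
      exact hGpos t ht.1 (lt_trans ht.2 hTε₁)
  have h1 : g 0 < g T := hgmono (Set.left_mem_Icc.2 hT.le) (Set.right_mem_Icc.2 hT.le) hT
  have h2 : g T ≤ ψ z := hmax' T (by rw [abs_of_pos hT]; exact hTε₂)
  have h3 : g 0 = ψ z := by rw [hg_def]; simp [hc0]
  linarith

lemma contAt_hessian_entry {w : EuclideanSpace ℝ (Fin n) → ℝ} {O : Set (EuclideanSpace ℝ (Fin n))}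
    (hO : IsOpen O) (hC : ContDiffOn ℝ 2 w O) {z : EuclideanSpace ℝ (Fin n)} (hz : z ∈ O)
    (i j : Fin n) : ContinuousAt (fun x => hessianMatrix n w x i j) z := by
  have hf1 : ContDiffOn ℝ 1 (fderiv ℝ w) O := hC.fderiv_of_isOpen hO (by norm_num)
  have hcont2 : ContinuousOn (fderiv ℝ (fderiv ℝ w)) O :=
    hf1.continuousOn_fderiv_of_isOpen hO le_rfl
  have hA : Continuous fun L : EuclideanSpace ℝ (Fin n) →L[ℝ] (EuclideanSpace ℝ (Fin n) →L[ℝ] ℝ)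
      => L (EuclideanSpace.single i 1) (EuclideanSpace.single j 1) := by
    have h1 : Continuous fun L : EuclideanSpace ℝ (Fin n) →L[ℝ] (EuclideanSpace ℝ (Fin n) →L[ℝ] ℝ)
        => L (EuclideanSpace.single i 1) :=
      (ContinuousLinearMap.apply ℝ (EuclideanSpace ℝ (Fin n) →L[ℝ] ℝ)
        (EuclideanSpace.single i 1)).continuous
    have h2 : Continuous fun L : EuclideanSpace ℝ (Fin n) →L[ℝ] ℝ
        => L (EuclideanSpace.single j 1) :=
      (ContinuousLinearMap.apply ℝ ℝ (EuclideanSpace.single j 1)).continuous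
    exact h2.comp h1
  have heval : ContinuousAt (fun x => fderiv ℝ (fderiv ℝ w) x
      (EuclideanSpace.single i 1) (EuclideanSpace.single j 1)) z :=
    (hA.comp_continuousOn hcont2).continuousAt (hO.mem_nhds hz)
  refine heval.congr ?_
  filter_upwards [hO.mem_nhds hz] with x hx
  exact (hessian_apply ((hC x hx).contDiffAt (hO.mem_nhds hx)) i j).symm

lemma contAt_fderiv {w : EuclideanSpace ℝ (Fin n) → ℝ} {O : Set (EuclideanSpace ℝ (Fin n))}
    (hO : IsOpen O) (hC : ContDiffOn ℝ 2 w O) {z : EuclideanSpace ℝ (Fin n)} (hz : z ∈ O) :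
    ContinuousAt (fun x => fderiv ℝ w x) z :=
  (hC.continuousOn_fderiv_of_isOpen hO one_le_two).continuousAt (hO.mem_nhds hz)

noncomputable def ell (n : ℕ) (i₀ : Fin n) : EuclideanSpace ℝ (Fin n) →L[ℝ] ℝ :=
  innerSL ℝ (EuclideanSpace.single i₀ (1:ℝ))

lemma ell_apply (i₀ : Fin n) (v : EuclideanSpace ℝ (Fin n)) : ell n i₀ v = v i₀ := by
  simp [ell, EuclideanSpace.inner_single_left]

lemma ell_norm_le (i₀ : Fin n) : ‖ell n i₀‖ ≤ 1 := by
  rw [ell, innerSL_apply_norm, EuclideanSpace.norm_single]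
  simp

noncomputable def barrier (n : ℕ) (α : ℝ) (i₀ : Fin n) (x : EuclideanSpace ℝ (Fin n)) : ℝ :=
  Real.exp (α * x i₀)

lemma barrier_hasFDerivAt (α : ℝ) (i₀ : Fin n) (x : EuclideanSpace ℝ (Fin n)) :
    HasFDerivAt (barrier n α i₀) ((α * Real.exp (α * x i₀)) • ell n i₀) x := by
  have h := (Real.hasDerivAt_exp ((α • ell n i₀) x)).comp_hasFDerivAt x
    (α • ell n i₀).hasFDerivAt
  have hfun : Real.exp ∘ ⇑(α • ell n i₀) = barrier n α i₀ := by
    funext y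
    show Real.exp ((α • ell n i₀) y) = barrier n α i₀ y
    rw [barrier, ContinuousLinearMap.smul_apply, ell_apply, smul_eq_mul]
  have hval : Real.exp ((α • ell n i₀) x) • (α • ell n i₀)
      = (α * Real.exp (α * x i₀)) • ell n i₀ := by
    rw [ContinuousLinearMap.smul_apply, ell_apply, smul_eq_mul, smul_smul]
    ring_nf
  rw [hfun, hval] at h
  exact h

lemma barrier_contDiff (α : ℝ) (i₀ : Fin n) : ContDiff ℝ 2 (barrier n α i₀) := by
  have : barrier n α i₀ = fun y => Real.exp ((α • ell n i₀) y) := by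
    funext y
    rw [barrier, ContinuousLinearMap.smul_apply, ell_apply, smul_eq_mul]
  rw [this]
  exact Real.contDiff_exp.of_le le_top |>.comp ((α • ell n i₀).contDiff)

lemma barrier_fderiv (α : ℝ) (i₀ : Fin n) (x : EuclideanSpace ℝ (Fin n)) :
    fderiv ℝ (barrier n α i₀) x = (α * Real.exp (α * x i₀)) • ell n i₀ :=
  (barrier_hasFDerivAt α i₀ x).fderiv

lemma barrier_fderiv_apply_single (α : ℝ) (i₀ j : Fin n) (y : EuclideanSpace ℝ (Fin n)) :
    fderiv ℝ (barrier n α i₀) y (EuclideanSpace.single j 1)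
      = (α * (if i₀ = j then (1:ℝ) else 0)) * barrier n α i₀ y := by
  rw [barrier_fderiv, ContinuousLinearMap.smul_apply, ell_apply, smul_eq_mul,
    EuclideanSpace.single_apply, barrier]
  ring

lemma barrier_hessian (α : ℝ) (i₀ : Fin n) (x : EuclideanSpace ℝ (Fin n)) :
    hessianMatrix n (barrier n α i₀) x
      = (α ^ 2 * Real.exp (α * x i₀)) • Matrix.single i₀ i₀ (1:ℝ) := by
  ext i j
  show fderiv ℝ (fun y => fderiv ℝ (barrier n α i₀) y (EuclideanSpace.single j 1)) x
      (EuclideanSpace.single i 1) = _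
  have hfun : (fun y => fderiv ℝ (barrier n α i₀) y (EuclideanSpace.single j 1))
      = fun y => (α * (if i₀ = j then (1:ℝ) else 0)) * barrier n α i₀ y := by
    funext y
    exact barrier_fderiv_apply_single α i₀ j y
  rw [hfun, fderiv_const_mul (barrier_hasFDerivAt α i₀ x).differentiableAt,
    ContinuousLinearMap.smul_apply, barrier_fderiv, ContinuousLinearMap.smul_apply,
    ell_apply, EuclideanSpace.single_apply]
  rw [Matrix.smul_apply, Matrix.single]
  by_cases h1 : i₀ = i <;> by_cases h2 : i₀ = j <;>
    simp [h1, h2, Matrix.of_apply, eq_comm] <;> ring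

lemma psi_fderiv {w : EuclideanSpace ℝ (Fin n) → ℝ} {O : Set (EuclideanSpace ℝ (Fin n))}
    (hO : IsOpen O) (hC : ContDiffOn ℝ 2 w O) {y : EuclideanSpace ℝ (Fin n)} (hy : y ∈ O)
    (δ α : ℝ) (i₀ : Fin n) :
    fderiv ℝ (fun x => w x + δ * barrier n α i₀ x) y
      = fderiv ℝ w y + δ • fderiv ℝ (barrier n α i₀) y := by
  have h1 : DifferentiableAt ℝ w y :=
    (((hC y hy).contDiffAt (hO.mem_nhds hy))).differentiableAt two_ne_zero
  have h2 : DifferentiableAt ℝ (barrier n α i₀) y :=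
    (barrier_hasFDerivAt α i₀ y).differentiableAt
  rw [fderiv_fun_add h1 (h2.const_mul δ), fderiv_const_mul h2]

lemma psi_hessian {w : EuclideanSpace ℝ (Fin n) → ℝ} {O : Set (EuclideanSpace ℝ (Fin n))}
    (hO : IsOpen O) (hC : ContDiffOn ℝ 2 w O) {z : EuclideanSpace ℝ (Fin n)} (hz : z ∈ O)
    (δ α : ℝ) (i₀ : Fin n) :
    hessianMatrix n (fun x => w x + δ * barrier n α i₀ x) z
      = hessianMatrix n w z
        + (δ * (α ^ 2 * Real.exp (α * z i₀))) • Matrix.single i₀ i₀ (1:ℝ) := by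
  ext i j
  show fderiv ℝ (fun y => fderiv ℝ (fun x => w x + δ * barrier n α i₀ x) y
      (EuclideanSpace.single j 1)) z (EuclideanSpace.single i 1) = _
  have hev : (fun y => fderiv ℝ (fun x => w x + δ * barrier n α i₀ x) y
        (EuclideanSpace.single j 1))
      =ᶠ[nhds z] (fun y => fderiv ℝ w y (EuclideanSpace.single j 1)
        + δ * ((α * (if i₀ = j then (1:ℝ) else 0)) * barrier n α i₀ y)) := by
    filter_upwards [hO.mem_nhds hz] with y hy
    rw [psi_fderiv hO hC hy δ α i₀, ContinuousLinearMap.add_apply,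
      ContinuousLinearMap.smul_apply, barrier_fderiv_apply_single, smul_eq_mul]
  rw [hev.fderiv_eq]
  have hd1 : DifferentiableAt ℝ (fun y => fderiv ℝ w y (EuclideanSpace.single j 1)) z := by
    have hdF : DifferentiableAt ℝ (fderiv ℝ w) z :=
      (((hC z hz).contDiffAt (hO.mem_nhds hz)).fderiv_right (m := 1) (le_refl _)).differentiableAt one_ne_zero
    exact hdF.clm_apply (differentiableAt_const _)
  have hd2 : DifferentiableAt ℝ
      (fun y => δ * ((α * (if i₀ = j then (1:ℝ) else 0)) * barrier n α i₀ y)) z :=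
    (((barrier_hasFDerivAt α i₀ z).differentiableAt).const_mul _).const_mul δ
  rw [fderiv_fun_add hd1 hd2, ContinuousLinearMap.add_apply]
  congr 1
  have heq2 : (fun y => δ * ((α * (if i₀ = j then (1:ℝ) else 0)) * barrier n α i₀ y))
      = fun y => (δ * (α * (if i₀ = j then (1:ℝ) else 0))) * barrier n α i₀ y := by
    funext y; ring
  rw [heq2, fderiv_const_mul (barrier_hasFDerivAt α i₀ z).differentiableAt,
    ContinuousLinearMap.smul_apply, barrier_fderiv, ContinuousLinearMap.smul_apply,
    ell_apply, EuclideanSpace.single_apply]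
  rw [Matrix.smul_apply, Matrix.single]
  by_cases h1 : i₀ = i <;> by_cases h2 : i₀ = j <;>
    simp [h1, h2, Matrix.of_apply, eq_comm] <;> ring

lemma quad_std_add (M : Matrix (Fin n) (Fin n) ℝ) (c : ℝ) (i₀ : Fin n) (z : Fin n → ℝ) :
    z ⬝ᵥ (M + c • Matrix.single i₀ i₀ (1:ℝ)).mulVec z
      = z ⬝ᵥ M.mulVec z + c * (z i₀) ^ 2 := by
  rw [Matrix.add_mulVec, dotProduct_add, Matrix.smul_mulVec, dotProduct_smul,
    Matrix.single_mulVec]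
  have : z ⬝ᵥ Function.update (0 : Fin n → ℝ) i₀ (1 * z i₀) = z i₀ * z i₀ := by
    rw [dotProduct]
    rw [Finset.sum_eq_single i₀]
    · simp
    · intro b _ hb; simp [Function.update, hb]
    · simp
  rw [this, smul_eq_mul]
  ring

lemma hessian_sub {u v : EuclideanSpace ℝ (Fin n) → ℝ} {O : Set (EuclideanSpace ℝ (Fin n))}
    (hO : IsOpen O) (hu : ContDiffOn ℝ 2 u O) (hv : ContDiffOn ℝ 2 v O)
    {z : EuclideanSpace ℝ (Fin n)} (hz : z ∈ O) :
    hessianMatrix n (fun y => u y - v y) z = hessianMatrix n u z - hessianMatrix n v z := by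
  ext i j
  show fderiv ℝ (fun y => fderiv ℝ (fun x => u x - v x) y (EuclideanSpace.single j 1)) z
      (EuclideanSpace.single i 1) = _
  have hev : (fun y => fderiv ℝ (fun x => u x - v x) y (EuclideanSpace.single j 1))
      =ᶠ[nhds z] (fun y => fderiv ℝ u y (EuclideanSpace.single j 1)
        - fderiv ℝ v y (EuclideanSpace.single j 1)) := by
    filter_upwards [hO.mem_nhds hz] with y hy
    rw [fderiv_fun_sub (((hu y hy).contDiffAt (hO.mem_nhds hy)).differentiableAt two_ne_zero)
      (((hv y hy).contDiffAt (hO.mem_nhds hy)).differentiableAt two_ne_zero)]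
    rfl
  rw [hev.fderiv_eq]
  have hd : ∀ f : EuclideanSpace ℝ (Fin n) → ℝ, ContDiffOn ℝ 2 f O →
      DifferentiableAt ℝ (fun y => fderiv ℝ f y (EuclideanSpace.single j 1)) z := by
    intro f hf
    exact ((((hf z hz).contDiffAt (hO.mem_nhds hz)).fderiv_right
      (m := 1) (le_refl _)).differentiableAt one_ne_zero).clm_apply (differentiableAt_const _)
  rw [fderiv_fun_sub (hd u hu) (hd v hv)]
  rfl

lemma hessian_isSymm {f : EuclideanSpace ℝ (Fin n) → ℝ} {x : EuclideanSpace ℝ (Fin n)}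
    (hf : ContDiffAt ℝ 2 f x) : (hessianMatrix n f x).IsSymm := by
  rw [Matrix.IsSymm]
  ext i j
  rw [Matrix.transpose_apply, hessian_apply hf j i, hessian_apply hf i j]
  exact hf.isSymmSndFDerivAt (by norm_num) _ _

set_option maxHeartbeats 1000000 in
open Filter Topology MeasureTheory in
lemma key_max_principle (hn : 1 ≤ n) (hlam : 0 < lam) (hle : lam ≤ Lam)
    {gam mu : ℝ} (hgam : 0 ≤ gam) (hmu : 0 ≤ mu)
    {Ω : Set (EuclideanSpace ℝ (Fin n))} (hopen : IsOpen Ω) (hbdd : Bornology.IsBounded Ω)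
    {w : EuclideanSpace ℝ (Fin n) → ℝ} (hwc : ContinuousOn w (closure Ω))
    (hw2 : ContDiffOn ℝ 2 w Ω)
    (hae : ∀ᵐ x ∂(volume.restrict Ω), x ∈ Ω →
      pucciMinus n lam Lam (hessianMatrix n w x)
        ≤ gam * ‖fderiv ℝ w x‖ + mu * max (-(w x)) 0)
    (hfr : ∀ x ∈ frontier Ω, w x ≤ 0) :
    ∀ x ∈ closure Ω, w x ≤ 0 := by
  by_contra hcon
  push_neg at hcon
  obtain ⟨x₀, hx₀mem, hx₀⟩ := hcon
  set i₀ : Fin n := ⟨0, hn⟩ with hi₀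
  set α : ℝ := (gam + 1) / lam with hα
  have hαpos : 0 < α := div_pos (by linarith) hlam
  have hαval : lam * α = gam + 1 := by
    rw [hα]; field_simp
  -- bound on coordinates
  obtain ⟨R, hRb⟩ := (hbdd.closure).exists_norm_le
  have hcoord : ∀ x ∈ closure Ω, x i₀ ≤ R := by
    intro x hx
    have h2 := (ell n i₀).le_opNorm x
    have h3 : ‖ell n i₀ x‖ ≤ 1 * ‖x‖ :=
      h2.trans (mul_le_mul_of_nonneg_right (ell_norm_le i₀) (norm_nonneg x))
    rw [one_mul, ell_apply, Real.norm_eq_abs] at h3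
    exact (le_abs_self _).trans (h3.trans (hRb x hx))
  -- the barrier
  set φ : EuclideanSpace ℝ (Fin n) → ℝ := barrier n α i₀ with hφ
  have hφpos : ∀ x, 0 < φ x := fun x => Real.exp_pos _
  set eR : ℝ := Real.exp (α * R) with heR
  have heRpos : 0 < eR := Real.exp_pos _
  have hφle : ∀ x ∈ closure Ω, φ x ≤ eR := by
    intro x hx
    exact Real.exp_le_exp.2 (mul_le_mul_of_nonneg_left (hcoord x hx) hαpos.le)
  set δ : ℝ := w x₀ / (2 * eR) with hδ
  have hδpos : 0 < δ := div_pos hx₀ (by positivity)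
  have hδeR : δ * eR = w x₀ / 2 := by
    rw [hδ]; field_simp
  set ψ : EuclideanSpace ℝ (Fin n) → ℝ := fun x => w x + δ * φ x with hψdef
  have hφcont : Continuous φ := (barrier_contDiff α i₀).continuous
  have hψc : ContinuousOn ψ (closure Ω) :=
    hwc.add ((hφcont.comp continuous_id).const_smul δ).continuousOn
  have hK : IsCompact (closure Ω) := hbdd.isCompact_closure
  obtain ⟨z, hz_mem, hz_max⟩ := hK.exists_isMaxOn ⟨x₀, hx₀mem⟩ hψc
  have hψx₀ : w x₀ < ψ x₀ := by
    have := hφpos x₀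
    rw [hψdef]
    simp only
    nlinarith
  have hψz : w x₀ < ψ z := lt_of_lt_of_le hψx₀ (hz_max hx₀mem)
  have hz_not_fr : z ∉ frontier Ω := by
    intro hfrz
    have h1 : w z ≤ 0 := hfr z hfrz
    have h2 : φ z ≤ eR := hφle z (frontier_subset_closure hfrz)
    have : ψ z ≤ δ * eR := by
      rw [hψdef]
      simp only
      nlinarith
    rw [hδeR] at this
    have h4 : w x₀ < w x₀ / 2 := lt_of_lt_of_le hψz this
    linarith
  have hzΩ : z ∈ Ω := by
    by_cases h : z ∈ interior Ω
    · rwa [hopen.interior_eq] at h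
    · exact absurd (⟨hz_mem, h⟩ : z ∈ frontier Ω) hz_not_fr
  have hwz : 0 < w z := by
    have h2 : φ z ≤ eR := hφle z hz_mem
    have : w x₀ < w z + δ * eR := by
      have := hψz
      rw [hψdef] at this
      simp only at this
      nlinarith
    rw [hδeR] at this
    linarith
  -- local max
  have hmaxloc : IsLocalMax ψ z :=
    hz_max.isLocalMax (Filter.mem_of_superset (hopen.mem_nhds hzΩ) subset_closure)
  have hψCD : ContDiffAt ℝ 2 ψ z := by
    refine ((hw2 z hzΩ).contDiffAt (hopen.mem_nhds hzΩ)).add ?_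
    exact (contDiffAt_const.mul (barrier_contDiff α i₀).contDiffAt)
  -- first derivative
  have hf0 : fderiv ℝ ψ z = 0 := hmaxloc.fderiv_eq_zero
  have hfw : fderiv ℝ w z = -(δ • fderiv ℝ φ z) := by
    have := psi_fderiv hopen hw2 hzΩ δ α i₀
    rw [← hψdef] at this
    rw [hf0] at this
    linear_combination (norm := abel) congrArg Neg.neg this
  have hfw_norm : ‖fderiv ℝ w z‖ ≤ δ * (α * φ z) := by
    rw [hfw, norm_neg, norm_smul, barrier_fderiv, norm_smul]
    rw [Real.norm_eq_abs, Real.norm_eq_abs, abs_of_pos hδpos,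
      abs_of_pos (by positivity : (0:ℝ) < α * Real.exp (α * z i₀))]
    calc δ * (α * Real.exp (α * z i₀) * ‖ell n i₀‖)
        ≤ δ * (α * Real.exp (α * z i₀) * 1) := by
          gcongr
          exact ell_norm_le i₀
      _ = δ * (α * φ z) := by rw [hφ, barrier]; ring
  -- second derivative: quadratic form bound
  set c : ℝ := δ * (α ^ 2 * Real.exp (α * z i₀)) with hc
  have hcpos : 0 < c := by positivity
  have hq : ∀ y : Fin n → ℝ,
      y ⬝ᵥ (hessianMatrix n w z).mulVec y ≤ -(c * (y i₀) ^ 2) := by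
    intro y
    have hψH := psi_hessian hopen hw2 hzΩ δ α i₀
    rw [← hψdef] at hψH
    have hq1 : y ⬝ᵥ (hessianMatrix n ψ z).mulVec y ≤ 0 := by
      set yE : EuclideanSpace ℝ (Fin n) := WithLp.toLp 2 y with hyE_def
      have hyE := quadform_hessian hψCD yE
      have hle0 := snd_deriv_nonpos_of_isLocalMax hψCD hmaxloc yE
      calc y ⬝ᵥ (hessianMatrix n ψ z).mulVec y
          = (fun i => yE i) ⬝ᵥ (hessianMatrix n ψ z).mulVec (fun i => yE i) := rfl
        _ = fderiv ℝ (fderiv ℝ ψ) z yE yE := hyE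
        _ ≤ 0 := hle0
    have hq2 : y ⬝ᵥ (hessianMatrix n ψ z).mulVec y
        = y ⬝ᵥ (hessianMatrix n w z).mulVec y + c * (y i₀) ^ 2 := by
      rw [hψH, quad_std_add]
    linarith [hq2 ▸ hq1]
  have hlow : lam * c ≤ pucciMinus n lam Lam (hessianMatrix n w z) :=
    pucci_lower hlam hle i₀ hcpos.le hq
  -- a.e. upper bound transferred to z by continuity
  have hup : pucciMinus n lam Lam (hessianMatrix n w z)
      ≤ gam * ‖fderiv ℝ w z‖ + mu * max (-(w z)) 0 := by
    set S : Set (EuclideanSpace ℝ (Fin n)) := {x | x ∈ Ω ∧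
      pucciMinus n lam Lam (hessianMatrix n w x)
        ≤ gam * ‖fderiv ℝ w x‖ + mu * max (-(w x)) 0} with hS
    have hzS : z ∈ closure S := by
      rw [mem_closure_iff]
      intro o ho hzo
      by_contra hemp
      rw [Set.not_nonempty_iff_eq_empty] at hemp
      have hsub : o ∩ Ω ⊆ {x | ¬ (x ∈ Ω →
          pucciMinus n lam Lam (hessianMatrix n w x)
            ≤ gam * ‖fderiv ℝ w x‖ + mu * max (-(w x)) 0)} ∩ Ω := by
        rintro x ⟨hxo, hxΩ⟩
        refine ⟨fun himp => ?_, hxΩ⟩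
        have : x ∈ o ∩ S := ⟨hxo, hxΩ, himp hxΩ⟩
        rw [hemp] at this
        exact this
      have h0 : volume ({x | ¬ (x ∈ Ω →
          pucciMinus n lam Lam (hessianMatrix n w x)
            ≤ gam * ‖fderiv ℝ w x‖ + mu * max (-(w x)) 0)} ∩ Ω) = 0 := by
        have := hae
        rw [MeasureTheory.ae_iff, Measure.restrict_apply' hopen.measurableSet] at this
        exact this
      have hpos2 : 0 < volume (o ∩ Ω) :=
        (ho.inter hopen).measure_pos volume ⟨z, hzo, hzΩ⟩
      exact absurd (measure_mono_null hsub h0) (ne_of_gt hpos2)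
    obtain ⟨xs, hxsS, hxs⟩ := mem_closure_iff_seq_limit.1 hzS
    -- continuity ingredients at z
    have hcH : ∀ i j : Fin n, Tendsto (fun k => hessianMatrix n w (xs k) i j) atTop
        (𝓝 (hessianMatrix n w z i j)) := fun i j =>
      ((contAt_hessian_entry hopen hw2 hzΩ i j).tendsto).comp hxs
    have hcF : Tendsto (fun k => ‖fderiv ℝ w (xs k)‖) atTop (𝓝 ‖fderiv ℝ w z‖) :=
      (continuous_norm.continuousAt.tendsto.comp
        (((contAt_fderiv hopen hw2 hzΩ).tendsto).comp hxs))
    have hcw : Tendsto (fun k => w (xs k)) atTop (𝓝 (w z)) :=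
      ((((hw2 z hzΩ).contDiffAt (hopen.mem_nhds hzΩ)).continuousAt).tendsto).comp hxs
    have hcsum : Tendsto (fun k => Lam * ∑ i, ∑ j,
        |(hessianMatrix n w z - hessianMatrix n w (xs k)) i j|) atTop (𝓝 (Lam * 0)) := by
      refine Tendsto.const_mul Lam ?_
      have : Tendsto (fun k => ∑ i, ∑ j,
          |(hessianMatrix n w z - hessianMatrix n w (xs k)) i j|) atTop
          (𝓝 (∑ i : Fin n, ∑ j : Fin n, (0:ℝ))) := by
        refine tendsto_finset_sum _ fun i _ => tendsto_finset_sum _ fun j _ => ?_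
        have h1 : Tendsto (fun k => (hessianMatrix n w z - hessianMatrix n w (xs k)) i j)
            atTop (𝓝 0) := by
          have h2 : Tendsto (fun k => hessianMatrix n w z i j - hessianMatrix n w (xs k) i j)
              atTop (𝓝 (hessianMatrix n w z i j - hessianMatrix n w z i j)) :=
            tendsto_const_nhds.sub (hcH i j)
          rw [sub_self] at h2
          exact h2
        have := h1.abs
        rwa [abs_zero] at this
      simpa using this
    have hbound : ∀ k, pucciMinus n lam Lam (hessianMatrix n w z)
        ≤ gam * ‖fderiv ℝ w (xs k)‖ + mu * max (-(w (xs k))) 0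
          + Lam * ∑ i, ∑ j, |(hessianMatrix n w z - hessianMatrix n w (xs k)) i j| := by
      intro k
      have h1 := pucciMinus_lipschitz (n := n) hlam.le hle
        (hessianMatrix n w z) (hessianMatrix n w (xs k))
      have h2 := (hxsS k).2
      linarith
    have hlim : Tendsto (fun k => gam * ‖fderiv ℝ w (xs k)‖ + mu * max (-(w (xs k))) 0
        + Lam * ∑ i, ∑ j, |(hessianMatrix n w z - hessianMatrix n w (xs k)) i j|) atTop
        (𝓝 (gam * ‖fderiv ℝ w z‖ + mu * max (-(w z)) 0 + Lam * 0)) := by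
      refine Tendsto.add (Tendsto.add (hcF.const_mul gam) ?_) hcsum
      exact ((hcw.neg.max tendsto_const_nhds).const_mul mu)
    have := ge_of_tendsto hlim (Filter.Eventually.of_forall hbound)
    linarith
  -- conclusion
  have hmaxz : max (-(w z)) 0 = 0 := max_eq_right (by linarith)
  rw [hmaxz] at hup
  have hchain : lam * c ≤ gam * (δ * (α * φ z)) := by
    have h2 : gam * ‖fderiv ℝ w z‖ ≤ gam * (δ * (α * φ z)) :=
      mul_le_mul_of_nonneg_left hfw_norm hgam
    linarith
  have hφz : φ z = Real.exp (α * z i₀) := rfl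
  rw [hc, hφz] at hchain
  have hexp : 0 < Real.exp (α * z i₀) := Real.exp_pos _
  nlinarith [hchain, hαval, mul_pos hδpos hexp, mul_pos hαpos hexp]

open MeasureTheory in
/-- Uniqueness of strong solutions (classical regularity): if `F[u] = F[v]` a.e. in `Ω`
and `u = v` on `∂Ω`, then `u = v` on the closure of `Ω`. -/
theorem uniqueness_of_strong_solutions
    (n : ℕ) (hn : 1 ≤ n) (lam Lam gam mu : ℝ) (hlam : 0 < lam) (hle : lam ≤ Lam)
    (hgam : 0 ≤ gam) (hmu : 0 ≤ mu)
    (Ω : Set (EuclideanSpace ℝ (Fin n))) (hopen : IsOpen Ω)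
    (hbdd : Bornology.IsBounded Ω) (hne : Ω.Nonempty)
    (F : EuclideanSpace ℝ (Fin n) → ℝ → EuclideanSpace ℝ (Fin n) →
      Matrix (Fin n) (Fin n) ℝ → ℝ)
    (hF : ∀ x ∈ Ω, ∀ (r s : ℝ) (p q : EuclideanSpace ℝ (Fin n))
      (M N : Matrix (Fin n) (Fin n) ℝ), M.IsSymm → N.IsSymm →
      pucciMinus n lam Lam (M - N) - gam * ‖p - q‖ - mu * max (s - r) 0 ≤
        F x r p M - F x s q N ∧
      F x r p M - F x s q N ≤
        pucciPlus n lam Lam (M - N) + gam * ‖p - q‖ + mu * max (r - s) 0)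
    (u v : EuclideanSpace ℝ (Fin n) → ℝ)
    (hu : ContinuousOn u (closure Ω)) (hu2 : ContDiffOn ℝ 2 u Ω)
    (hv : ContinuousOn v (closure Ω)) (hv2 : ContDiffOn ℝ 2 v Ω)
    (heq : ∀ᵐ x ∂(volume.restrict Ω),
      F x (u x) (gradient u x) (hessianMatrix n u x) =
        F x (v x) (gradient v x) (hessianMatrix n v x))
    (hbdry : ∀ x ∈ frontier Ω, u x = v x) :
    ∀ x ∈ closure Ω, u x = v x := by
  have main : ∀ a b : (EuclideanSpace ℝ (Fin n) → ℝ),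
      ContinuousOn a (closure Ω) → ContDiffOn ℝ 2 a Ω →
      ContinuousOn b (closure Ω) → ContDiffOn ℝ 2 b Ω →
      (∀ᵐ x ∂(volume.restrict Ω),
        F x (a x) (gradient a x) (hessianMatrix n a x) =
          F x (b x) (gradient b x) (hessianMatrix n b x)) →
      (∀ x ∈ frontier Ω, a x = b x) →
      ∀ x ∈ closure Ω, a x - b x ≤ 0 := by
    intro a b ha ha2 hb hb2 habe habd
    have hae : ∀ᵐ x ∂(volume.restrict Ω), x ∈ Ω →
        pucciMinus n lam Lam (hessianMatrix n (fun y => a y - b y) x)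
          ≤ gam * ‖fderiv ℝ (fun y => a y - b y) x‖
            + mu * max (-((fun y => a y - b y) x)) 0 := by
      filter_upwards [habe, ae_restrict_mem hopen.measurableSet] with x hFx hxΩ
      intro _
      have hda : DifferentiableAt ℝ a x :=
        ((ha2 x hxΩ).contDiffAt (hopen.mem_nhds hxΩ)).differentiableAt two_ne_zero
      have hdb : DifferentiableAt ℝ b x :=
        ((hb2 x hxΩ).contDiffAt (hopen.mem_nhds hxΩ)).differentiableAt two_ne_zero
      have hsyma : (hessianMatrix n a x).IsSymm :=
        hessian_isSymm ((ha2 x hxΩ).contDiffAt (hopen.mem_nhds hxΩ))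
      have hsymb : (hessianMatrix n b x).IsSymm :=
        hessian_isSymm ((hb2 x hxΩ).contDiffAt (hopen.mem_nhds hxΩ))
      have h1 := (hF x hxΩ (a x) (b x) (gradient a x) (gradient b x)
        (hessianMatrix n a x) (hessianMatrix n b x) hsyma hsymb).1
      rw [hFx, sub_self] at h1
      have e1 : hessianMatrix n (fun y => a y - b y) x
          = hessianMatrix n a x - hessianMatrix n b x := hessian_sub hopen ha2 hb2 hxΩ
      have e2 : ‖gradient a x - gradient b x‖ = ‖fderiv ℝ (fun y => a y - b y) x‖ := by
        have hsub : fderiv ℝ (fun y => a y - b y) x = fderiv ℝ a x - fderiv ℝ b x :=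
          fderiv_sub hda hdb
        rw [gradient, gradient, ← map_sub, hsub, LinearIsometryEquiv.norm_map]
      have e3 : max (b x - a x) 0 = max (-((fun y => a y - b y) x)) 0 := by
        simp only [neg_sub]
      rw [e2, e3] at h1
      rw [e1]
      linarith
    have := key_max_principle hn hlam hle hgam hmu hopen hbdd (ha.sub hb) (ha2.sub hb2) hae
      (fun x hx => by show a x - b x ≤ 0; rw [habd x hx, sub_self])
    exact this
  intro x hx
  have h1 := main u v hu hu2 hv hv2 heq hbdry x hx
  have h2 := main v u hv hv2 hu hu2 (heq.mono fun x h => h.symm)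
    (fun x hx => (hbdry x hx).symm) x hx
  linarith
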